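/- Let p be an odd prime, and let r, t be non-negative integers with r ≥ t and r - t even such that t_0 ≠ p - 1, r_0 ≡ t_0 (mod 2), and r_0 < t_0 (where n_i denotes the i-th base-p digit of n). If (N, σ, δ, I) is an admissible quadruple for the pair (r, t) with N ≥ 1, then 0 ∈ I, σ_0 = p - 1 - t_0, and δ_0 = (r_0 + t_0)/2 + 1. -/

import Mathlib

/-- The `i`-th digit of the base-`p` expansion of `n`. -/
def digit (p n i : ℕ) : ℕ := n / p ^ i % p

/-- `σ_I = ∑_{i ∈ I} p^i σ_i`. -/
def digitSum (p σ : ℕ) (I : Finset ℕ) : ℕ := ∑ i ∈ I, p ^ i * digit p σ i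

/-- An admissible triple `(N, σ, δ)`. -/
def AdmissibleTriple (p N σ δ : ℕ) : Prop :=
  σ < p ^ (N + 1) - p ^ N ∧ δ < p ^ (N + 1) - p ^ N ∧
  (∀ i < N, digit p σ i + digit p δ i ≤ p - 1) ∧
  digit p σ N + digit p δ N < p - 1

/-- An admissible quadruple `(N, σ, δ, I)`. -/
def AdmissibleQuadruple (p N σ δ : ℕ) (I : Finset ℕ) : Prop :=
  AdmissibleTriple p N σ δ ∧ ∀ i ∈ I, digit p σ i ≠ 0 ∧ i ≠ N

/-- An admissible quadruple for the pair `(r, t)`. -/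
def AdmissibleQuadrupleFor (p r t N σ δ : ℕ) (I : Finset ℕ) : Prop :=
  AdmissibleQuadruple p N σ δ I ∧
  t + 2 * digitSum p σ I = p ^ N - 1 + σ ∧
  r ≡ p ^ N - 1 + σ + 2 * δ [MOD 2 * p ^ (N + 1)]

/-!
Reducing the two defining relations modulo `p` leaves congruences between units digits:
`t₀ + 2 [0 ∈ I] σ₀ ≡ σ₀ - 1` and `r₀ ≡ σ₀ - 1 + 2 δ₀`, the `-1` coming from `p ^ N` with `N ≥ 1`.
All digits lie in `[0, p)`, so each congruence leaves only `-p`, `0` or `p` for the difference of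
its two sides. If `0 ∉ I` this forces `σ₀ = t₀ + 1` and then `r₀ - t₀ = 2 δ₀ - p`, impossible
since `p` is odd and `r₀ ≡ t₀ (mod 2)`, `r₀ < t₀`. If `0 ∈ I`, then `σ₀ ≠ 0` forces
`σ₀ = p - 1 - t₀`, and the same parity argument gives `2 δ₀ = r₀ + t₀ + 2`.
-/

lemma Int.eq_zero_or_eq_or_eq_neg_of_dvd {n x : ℤ} (h : n ∣ x) (hlo : -(2 * n) < x)
    (hhi : x < 2 * n) : x = 0 ∨ x = n ∨ x = -n := by
  obtain ⟨k, rfl⟩ := h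
  have hk : -2 < k ∧ k < 2 := by constructor <;> nlinarith
  obtain ⟨hk₁, hk₂⟩ := hk
  interval_cases k <;> simp

lemma digit_zero (p n : ℕ) : digit p n 0 = n % p := by simp [digit]

lemma natCast_digit_zero (p n : ℕ) : (digit p n 0 : ZMod p) = n := by
  rw [digit_zero, ZMod.natCast_mod]

lemma natCast_digitSum (p σ : ℕ) (I : Finset ℕ) :
    (digitSum p σ I : ZMod p) = if 0 ∈ I then (σ : ZMod p) else 0 := by
  unfold digitSum
  push_cast
  split_ifs with h0
  · rw [Finset.sum_eq_single_of_mem 0 h0 fun i _ hi => by simp [hi]]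
    simp [natCast_digit_zero]
  · exact Finset.sum_eq_zero fun i hi => by simp [show i ≠ 0 by rintro rfl; exact h0 hi]

theorem AdmissibleQuadrupleFor.digit_zero_modEq {p r t N σ δ : ℕ} {I : Finset ℕ}
    (h : AdmissibleQuadrupleFor p r t N σ δ I) (hp : 0 < p) (hN : 1 ≤ N) :
    (digit p t 0 : ℤ) + 2 * (if 0 ∈ I then (digit p σ 0 : ℤ) else 0) ≡ digit p σ 0 - 1
        [ZMOD p] ∧
      (digit p r 0 : ℤ) ≡ digit p σ 0 - 1 + 2 * digit p δ 0 [ZMOD p] := by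
  obtain ⟨-, hsum, hr⟩ := h
  have hpN : (p : ZMod p) ^ N = 0 := by simp [zero_pow (by omega : N ≠ 0)]
  have hsum' := congrArg (Nat.cast : ℕ → ZMod p) hsum
  have hr' := (ZMod.natCast_eq_natCast_iff _ _ p).2
    (hr.of_dvd ((dvd_pow_self p (Nat.succ_ne_zero N)).mul_left 2))
  push_cast [Nat.cast_sub (Nat.one_le_pow N p hp), natCast_digitSum, hpN] at hsum' hr'
  constructor
  · rw [← ZMod.intCast_eq_intCast_iff]
    push_cast [natCast_digit_zero]
    split_ifs at hsum' ⊢ <;> linear_combination hsum'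
  · rw [← ZMod.intCast_eq_intCast_iff]
    push_cast [natCast_digit_zero]
    linear_combination hr'

section UnitsDigits

variable {p T R a b : ℕ}

lemma false_of_units_digits_of_modEq (hodd : Odd p) (hT : T < p - 1) (hRT : R < T)
    (hpar : R % 2 = T % 2) (hab : a + b ≤ p - 1) (h₁ : (T : ℤ) ≡ a - 1 [ZMOD p])
    (h₂ : (R : ℤ) ≡ a - 1 + 2 * b [ZMOD p]) : False := by
  obtain ⟨m, rfl⟩ := hodd
  have ha : a = T + 1 := by
    rcases Int.eq_zero_or_eq_or_eq_neg_of_dvd h₁.dvd (by omega) (by omega) with h | h | h <;>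
      omega
  subst ha
  rcases Int.eq_zero_or_eq_or_eq_neg_of_dvd h₂.dvd (by omega) (by omega) with h | h | h <;>
    omega

lemma units_digits_of_modEq (hodd : Odd p) (hT : T < p) (hRT : R < T)
    (hpar : R % 2 = T % 2) (ha : a ≠ 0) (hab : a + b ≤ p - 1)
    (h₁ : (T : ℤ) + 2 * a ≡ a - 1 [ZMOD p]) (h₂ : (R : ℤ) ≡ a - 1 + 2 * b [ZMOD p]) :
    a = p - 1 - T ∧ 2 * b = R + T + 2 := by
  obtain ⟨m, rfl⟩ := hodd
  have ha : a = 2 * m - T := by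
    rcases Int.eq_zero_or_eq_or_eq_neg_of_dvd h₁.dvd (by omega) (by omega) with h | h | h <;>
      omega
  subst ha
  rcases Int.eq_zero_or_eq_or_eq_neg_of_dvd h₂.dvd (by omega) (by omega) with h | h | h <;>
    omega

end UnitsDigits

theorem stmt_14_general (p : ℕ) (hodd : Odd p) (r t : ℕ)
    (ht0 : digit p t 0 ≠ p - 1)
    (hpar : digit p r 0 % 2 = digit p t 0 % 2) (hlt : digit p r 0 < digit p t 0)
    (N σ δ : ℕ) (I : Finset ℕ)
    (h : AdmissibleQuadrupleFor p r t N σ δ I) (hN : 1 ≤ N) :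
    0 ∈ I ∧ digit p σ 0 = p - 1 - digit p t 0 ∧
      2 * digit p δ 0 = digit p r 0 + digit p t 0 + 2 := by
  have hp : 0 < p := hodd.pos
  have hTp : digit p t 0 < p := by rw [digit_zero]; exact Nat.mod_lt t hp
  obtain ⟨h₁, h₂⟩ := h.digit_zero_modEq hp hN
  obtain ⟨⟨⟨-, -, hdigits, -⟩, hI⟩, -⟩ := h
  have hab : digit p σ 0 + digit p δ 0 ≤ p - 1 := hdigits 0 hN
  have h0 : 0 ∈ I := by
    by_contra h0
    rw [if_neg h0, mul_zero, add_zero] at h₁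
    exact false_of_units_digits_of_modEq hodd (by omega) hlt hpar hab h₁ h₂
  rw [if_pos h0] at h₁
  exact ⟨h0, units_digits_of_modEq hodd hTp hlt hpar (hI 0 h0).1 hab h₁ h₂⟩

theorem stmt_14 (p : ℕ) (hp : p.Prime) (hodd : Odd p) (r t : ℕ) (hrt : t ≤ r)
    (hev : Even (r - t)) (ht0 : digit p t 0 ≠ p - 1)
    (hpar : digit p r 0 % 2 = digit p t 0 % 2) (hlt : digit p r 0 < digit p t 0)
    (N σ δ : ℕ) (I : Finset ℕ)
    (h : AdmissibleQuadrupleFor p r t N σ δ I) (hN : 1 ≤ N) :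
    0 ∈ I ∧ digit p σ 0 = p - 1 - digit p t 0 ∧
      2 * digit p δ 0 = digit p r 0 + digit p t 0 + 2 :=
  stmt_14_general p hodd r t ht0 hpar hlt N σ δ I h hN
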